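/- Under the conditional independence assumption Z ⟂ R | (Y, A), the conditional expectation of the odds ratio among complete cases given A = a, Z = z equals E[OR(a,Y) | R=1, A=a, Z=z] = [f(R=1 | a, y₁) / f(R=0 | a, y₁)] · [f(R=0, a, z) / f(R=1, a, z)]. -/

import Mathlib

open Finset

variable {A Y Z : Type} [Fintype A] [Fintype Y] [Fintype Z]

/-- Marginal mass `f(a, y)` of the joint mass function `f` on `(A, Y, Z, R)`,
with `R` encoded by `Bool` (`true` meaning `R = 1`). -/
noncomputable def mAY (f : A → Y → Z → Bool → ℝ) (a : A) (y : Y) : ℝ :=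
  ∑ z, ∑ r, f a y z r

/-- Marginal mass `f(a, y, z)`. -/
noncomputable def mAYZ (f : A → Y → Z → Bool → ℝ) (a : A) (y : Y) (z : Z) : ℝ :=
  ∑ r, f a y z r

/-- Marginal mass `f(a, y, r)`. -/
noncomputable def mAYR (f : A → Y → Z → Bool → ℝ) (a : A) (y : Y) (r : Bool) : ℝ :=
  ∑ z, f a y z r

/-- Marginal mass `f(a)`. -/
noncomputable def mA (f : A → Y → Z → Bool → ℝ) (a : A) : ℝ :=
  ∑ y, ∑ z, ∑ r, f a y z r

/-- Marginal mass `f(a, r)`. -/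
noncomputable def mAR (f : A → Y → Z → Bool → ℝ) (a : A) (r : Bool) : ℝ :=
  ∑ y, ∑ z, f a y z r

/-- Marginal mass `f(a, z)`. -/
noncomputable def mAZ (f : A → Y → Z → Bool → ℝ) (a : A) (z : Z) : ℝ :=
  ∑ y, ∑ r, f a y z r

/-- Marginal mass `f(a, z, r)`. -/
noncomputable def mAZR (f : A → Y → Z → Bool → ℝ) (a : A) (z : Z) (r : Bool) : ℝ :=
  ∑ y, f a y z r

/-- The shadow-variable assumption (a): the conditional independence `Z ⟂ R | (Y, A)`,
expressed via joint masses as `f(a,y,z,r) · f(a,y) = f(a,y,z) · f(a,y,r)`,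
i.e. `f(z, r | y, a) = f(z | y, a) · f(r | y, a)`. -/
def CondIndepZR (f : A → Y → Z → Bool → ℝ) : Prop :=
  ∀ (a : A) (y : Y) (z : Z) (r : Bool),
    f a y z r * mAY f a y = mAYZ f a y z * mAYR f a y r

/-- The odds-ratio function
`OR(a,y) = [f(R=0 | a, y) · f(R=1 | a, y₁)] / [f(R=1 | a, y) · f(R=0 | a, y₁)]`,
with reference value `y₁`. -/
noncomputable def OddsRatio (f : A → Y → Z → Bool → ℝ) (y₁ : Y) (a : A) (y : Y) : ℝ :=
  ((mAYR f a y false / mAY f a y) * (mAYR f a y₁ true / mAY f a y₁)) /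
    ((mAYR f a y true / mAY f a y) * (mAYR f a y₁ false / mAY f a y₁))

/-- The conditional expectation of the odds ratio among complete cases given `A = a, Z = z`:
`E[OR(a,Y) | R=1, A=a, Z=z] = Σ_y OR(a,y) · f(y | R=1, a, z)`. -/
noncomputable def expORz (f : A → Y → Z → Bool → ℝ) (y₁ : Y) (a : A) (z : Z) : ℝ :=
  ∑ y, OddsRatio f y₁ a y * (f a y z true / mAZR f a z true)

/-! Conditional independence with binary `R` gives the cross relation
`f(a,y,z,1) f(a,y,0) = f(a,y,z,0) f(a,y,1)`, so `OR(a,y) f(a,y,z,1) = c f(a,y,z,0)` with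
`c = f(a,y₁,1) / f(a,y₁,0)`. Summing over `y` yields `c f(a,z,0)`, and dividing by `f(a,z,1)`
gives the closed form. -/

set_option linter.unusedSectionVars false

section Marginals

variable (f : A → Y → Z → Bool → ℝ) (a : A)

theorem mAY_pos [Nonempty Z] (hpos : ∀ y z r, 0 < f a y z r) (y : Y) : 0 < mAY f a y :=
  Finset.sum_pos (fun z _ => Finset.sum_pos (fun r _ => hpos y z r) univ_nonempty) univ_nonempty

theorem mAYR_pos [Nonempty Z] (y : Y) (r : Bool) (hpos : ∀ z, 0 < f a y z r) :
    0 < mAYR f a y r :=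
  Finset.sum_pos (fun z _ => hpos z) univ_nonempty

end Marginals

section OddsRatio

variable {f : A → Y → Z → Bool → ℝ} {a : A}

theorem CondIndepZR.cross_mul_eq (hci : CondIndepZR f) {y : Y} (hy : mAY f a y ≠ 0)
    (z : Z) : f a y z true * mAYR f a y false = f a y z false * mAYR f a y true :=
  mul_right_cancel₀ hy <| by
    linear_combination mAYR f a y false * hci a y z true - mAYR f a y true * hci a y z false

theorem oddsRatio_eq {y₁ y : Y} (hy : mAY f a y ≠ 0) (hy₁ : mAY f a y₁ ≠ 0) :
    OddsRatio f y₁ a y =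
      mAYR f a y false / mAYR f a y true * (mAYR f a y₁ true / mAYR f a y₁ false) := by
  unfold OddsRatio
  rw [div_mul_div_comm, div_mul_div_comm, div_div_div_cancel_right₀ (mul_ne_zero hy hy₁),
    div_mul_div_comm]

theorem CondIndepZR.oddsRatio_mul_eq (hci : CondIndepZR f) {y₁ y : Y} (hy : mAY f a y ≠ 0)
    (hy₁ : mAY f a y₁ ≠ 0) (hR : mAYR f a y true ≠ 0) (z : Z) :
    OddsRatio f y₁ a y * f a y z true =
      mAYR f a y₁ true / mAYR f a y₁ false * f a y z false := by
  rw [oddsRatio_eq hy hy₁, mul_right_comm, div_mul_eq_mul_div (mAYR f a y false),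
    mul_comm (mAYR f a y false), hci.cross_mul_eq hy z, mul_div_cancel_right₀ _ hR, mul_comm]

end OddsRatio

theorem expORz_closed_form_general
    (f : A → Y → Z → Bool → ℝ)
    (hpos : ∀ (a : A) (y : Y) (z : Z) (r : Bool), 0 < f a y z r)
    (hci : CondIndepZR f) (y₁ : Y) :
    ∀ (a : A) (z : Z),
      expORz f y₁ a z =
        ((mAYR f a y₁ true / mAY f a y₁) / (mAYR f a y₁ false / mAY f a y₁)) *
          (mAZR f a z false / mAZR f a z true) := by
  intro a z
  have : Nonempty Z := ⟨z⟩
  have hAY (y : Y) : mAY f a y ≠ 0 := (mAY_pos f a (hpos a) y).ne'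
  have hAYR (y : Y) : mAYR f a y true ≠ 0 := (mAYR_pos f a y true (hpos a y · true)).ne'
  calc expORz f y₁ a z
      = (∑ y, OddsRatio f y₁ a y * f a y z true) / mAZR f a z true := by
        simp only [expORz, mul_div_assoc', Finset.sum_div]
    _ = mAYR f a y₁ true / mAYR f a y₁ false * mAZR f a z false / mAZR f a z true := by
        simp only [hci.oddsRatio_mul_eq (hAY _) (hAY y₁) (hAYR _), ← Finset.mul_sum, mAZR]
    _ = _ := by
        rw [div_div_div_cancel_right₀ (hAY y₁), mul_div_assoc]

/-- under the shadow-variable conditional independence `Z ⟂ R | (Y, A)`,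
`E[OR(a,Y) | R=1, A=a, Z=z]
  = [f(R=1 | a, y₁) / f(R=0 | a, y₁)] · [f(R=0, a, z) / f(R=1, a, z)]`. -/
theorem expORz_closed_form
    (f : A → Y → Z → Bool → ℝ)
    (hpos : ∀ (a : A) (y : Y) (z : Z) (r : Bool), 0 < f a y z r)
    (hsum : ∑ a, ∑ y, ∑ z, ∑ r, f a y z r = 1)
    (hci : CondIndepZR f) (y₁ : Y) :
    ∀ (a : A) (z : Z),
      expORz f y₁ a z =
        ((mAYR f a y₁ true / mAY f a y₁) / (mAYR f a y₁ false / mAY f a y₁)) *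
          (mAZR f a z false / mAZR f a z true) :=
  expORz_closed_form_general f hpos hci y₁
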